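/- Let δ, α be integers with δ ≥ 1 and α ≥ 1, and let λ ∈ ℝ with λ > 1. Then Σ_{ℓ=0}^{2n} (ℓ/(2n))^α · ((δ + ⌈n − ℓ/2⌉)/n)^α · λ^{δ + ⌈ℓ/2⌉ − n} → 0 as n → ∞. In particular, there is no constant c > 0 such that c < Σ_{ℓ=0}^{2n} (ℓ/(2n))^α · ((δ + ⌈n − ℓ/2⌉)/n)^α · λ^{δ + ⌈ℓ/2⌉ − n} for all n ≥ 1. -/

import Mathlib

/-!
Substituting `ℓ = 2n - j`, the exponent of `λ` becomes `δ - ⌊j/2⌋` and the middle base becomes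
`b = (δ + ⌈j/2⌉)/n ≤ δ + 1`. Since `α ≥ 1`, `b ^ α ≤ (δ + 1) ^ (α - 1) * b`, so the `j`-th term is
at most a constant times `(δ + 1 + ⌊j/2⌋) λ^{-⌊j/2⌋} / n`. Each value of `⌊j/2⌋` occurs at most
twice and this series converges, so the whole sum is `O(1/n)`.
-/

open Filter Topology Finset

lemma ceil_natCast_div_two (j : ℕ) : ⌈(j : ℝ) / 2⌉ = ((j + 1) / 2 : ℕ) := by
  have h₁ : (j : ℝ) ≤ 2 * ((j + 1) / 2 : ℕ) := by exact_mod_cast (by omega : j ≤ 2 * ((j + 1) / 2))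
  have h₂ : 2 * (((j + 1) / 2 : ℕ) : ℝ) ≤ j + 1 := by exact_mod_cast Nat.mul_div_le (j + 1) 2
  rw [Int.ceil_eq_iff, Int.cast_natCast]
  constructor <;> linarith

lemma sum_range_two_mul_div_two {M : Type*} [AddCommMonoid M] (g : ℕ → M) (n : ℕ) :
    ∑ j ∈ range (2 * n), g (j / 2) = 2 • ∑ m ∈ range n, g m := by
  induction n with
  | zero => simp
  | succ n ih =>
    rw [Nat.mul_succ, sum_range_succ, sum_range_succ, ih, sum_range_succ, smul_add,
      Nat.mul_div_cancel_left _ two_pos, show (2 * n + 1) / 2 = n by omega, add_assoc,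
      two_nsmul (g n)]

lemma pow_le_pow_sub_one_mul {R : Type*} [Semiring R] [PartialOrder R] [IsOrderedRing R]
    {a b : R} {k : ℕ} (ha : 0 ≤ a) (hab : a ≤ b) (hk : 1 ≤ k) :
    a ^ k ≤ b ^ (k - 1) * a := by
  calc a ^ k = a ^ (k - 1) * a := by rw [← pow_succ, Nat.sub_add_cancel hk]
    _ ≤ b ^ (k - 1) * a := mul_le_mul_of_nonneg_right (pow_le_pow_left₀ ha hab _) ha

lemma summable_add_mul_geometric {r : ℝ} (hr₀ : 0 ≤ r) (hr₁ : r < 1) (c : ℝ) :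
    Summable fun m : ℕ => (c + m) * r ^ m := by
  have hnorm : ‖r‖ < 1 := by rwa [Real.norm_eq_abs, abs_of_nonneg hr₀]
  simpa [add_mul] using ((summable_geometric_of_lt_one hr₀ hr₁).mul_left c).add
    (by simpa using summable_pow_mul_geometric_of_norm_lt_one 1 hnorm)

noncomputable def growthTerm (δ α : ℕ) (lam : ℝ) (n ℓ : ℕ) : ℝ :=
  ((ℓ : ℝ) / (2 * n)) ^ α * ((((δ : ℤ) + ⌈(n : ℝ) - (ℓ : ℝ) / 2⌉ : ℤ) : ℝ) / (n : ℝ)) ^ α *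
    lam ^ ((δ : ℤ) + ⌈(ℓ : ℝ) / 2⌉ - (n : ℤ))

section growthTerm

variable {δ α n j : ℕ} {lam : ℝ}

lemma growthTerm_two_mul_sub (hlam : lam ≠ 0) (hj : j ≤ 2 * n) :
    growthTerm δ α lam n (2 * n - j) =
      (((2 * n - j : ℕ) : ℝ) / (2 * n)) ^ α * (((δ : ℝ) + ((j + 1) / 2 : ℕ)) / n) ^ α *
        (lam ^ δ * lam⁻¹ ^ (j / 2)) := by
  have hcast : ((2 * n - j : ℕ) : ℝ) = 2 * n - j := by push_cast [hj]; ring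
  have hceil₁ : ⌈(n : ℝ) - ((2 * n - j : ℕ) : ℝ) / 2⌉ = ((j + 1) / 2 : ℕ) := by
    rw [← ceil_natCast_div_two, hcast]; ring_nf
  have hceil₂ : ⌈((2 * n - j : ℕ) : ℝ) / 2⌉ = ((n - j / 2 : ℕ) : ℤ) := by
    rw [ceil_natCast_div_two, show (2 * n - j + 1) / 2 = n - j / 2 by omega]
  have hexp : (δ : ℤ) + ((n - j / 2 : ℕ) : ℤ) - n = (δ : ℤ) - (j / 2 : ℕ) := by omega
  rw [growthTerm, hceil₁, hceil₂, hexp, zpow_sub₀ hlam, zpow_natCast, zpow_natCast, inv_pow,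
    div_eq_mul_inv (lam ^ δ)]
  push_cast
  rfl

lemma growthTerm_nonneg (hlam : 0 < lam) {ℓ : ℕ} (hℓ : ℓ ≤ 2 * n) :
    0 ≤ growthTerm δ α lam n ℓ := by
  rw [← Nat.sub_sub_self hℓ, growthTerm_two_mul_sub hlam.ne' (Nat.sub_le _ _)]
  positivity

lemma growthTerm_two_mul_sub_le (hn : 1 ≤ n) (hα : 1 ≤ α) (hlam : 0 < lam) (hj : j ≤ 2 * n) :
    growthTerm δ α lam n (2 * n - j) ≤
      ((δ : ℝ) + 1) ^ (α - 1) * lam ^ δ / n * (((δ : ℝ) + 1 + (j / 2 : ℕ)) * lam⁻¹ ^ (j / 2)) := by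
  rw [growthTerm_two_mul_sub hlam.ne' hj]
  have hn' : (1 : ℝ) ≤ n := by exact_mod_cast hn
  set b : ℝ := ((δ : ℝ) + ((j + 1) / 2 : ℕ)) / n
  have hb₀ : 0 ≤ b := by positivity
  have hb_le : b ≤ δ + 1 := by
    rw [div_le_iff₀ (by positivity)]
    have : (((j + 1) / 2 : ℕ) : ℝ) ≤ n := by exact_mod_cast (by omega : (j + 1) / 2 ≤ n)
    nlinarith [(Nat.cast_nonneg δ : (0 : ℝ) ≤ δ)]
  have hb_le' : b ≤ ((δ : ℝ) + 1 + (j / 2 : ℕ)) / n := by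
    have : (((j + 1) / 2 : ℕ) : ℝ) ≤ 1 + (j / 2 : ℕ) := by
      exact_mod_cast (by omega : (j + 1) / 2 ≤ 1 + j / 2)
    exact div_le_div_of_nonneg_right (by linarith) (Nat.cast_nonneg n)
  have hfirst : (((2 * n - j : ℕ) : ℝ) / (2 * n)) ^ α ≤ 1 := by
    refine pow_le_one₀ (by positivity) ((div_le_one (by positivity)).2 ?_)
    exact_mod_cast (by omega : 2 * n - j ≤ 2 * n)
  calc (((2 * n - j : ℕ) : ℝ) / (2 * n)) ^ α * b ^ α * (lam ^ δ * lam⁻¹ ^ (j / 2))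
      ≤ 1 * (((δ : ℝ) + 1) ^ (α - 1) * (((δ : ℝ) + 1 + (j / 2 : ℕ)) / n)) *
          (lam ^ δ * lam⁻¹ ^ (j / 2)) := by
        gcongr
        exact (pow_le_pow_sub_one_mul hb₀ hb_le hα).trans (by gcongr)
    _ = _ := by ring

end growthTerm

lemma sum_growthTerm_le {δ α n : ℕ} {lam : ℝ} (hn : 1 ≤ n) (hα : 1 ≤ α) (hlam : 1 < lam) :
    ∑ ℓ ∈ range (2 * n + 1), growthTerm δ α lam n ℓ ≤
      2 * ((δ : ℝ) + 1) ^ (α - 1) * lam ^ δ * (∑' m : ℕ, ((δ : ℝ) + 1 + m) * lam⁻¹ ^ m) / n := by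
  have hlam₀ : 0 < lam := one_pos.trans hlam
  set K : ℝ := ((δ : ℝ) + 1) ^ (α - 1) * lam ^ δ / n
  set g : ℕ → ℝ := fun m => ((δ : ℝ) + 1 + m) * lam⁻¹ ^ m
  have hg : ∀ m, 0 ≤ g m := fun m => by positivity
  have hsum : Summable g :=
    summable_add_mul_geometric (by positivity) (inv_lt_one_of_one_lt₀ hlam) _
  rw [← sum_range_reflect]
  calc ∑ j ∈ range (2 * n + 1), growthTerm δ α lam n (2 * n + 1 - 1 - j)
      ≤ ∑ j ∈ range (2 * n + 1), K * g (j / 2) := sum_le_sum fun j hj => by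
        rw [Nat.add_sub_cancel]
        exact growthTerm_two_mul_sub_le hn hα hlam₀ (Nat.lt_succ_iff.1 (mem_range.1 hj))
    _ ≤ K * ∑ j ∈ range (2 * (n + 1)), g (j / 2) := by
        rw [← mul_sum]
        exact mul_le_mul_of_nonneg_left (sum_le_sum_of_subset_of_nonneg
          (range_subset_range.2 (by omega)) fun _ _ _ => hg _) (by positivity)
    _ = K * (2 * ∑ m ∈ range (n + 1), g m) := by
        rw [sum_range_two_mul_div_two, nsmul_eq_mul, Nat.cast_ofNat]
    _ ≤ K * (2 * ∑' m, g m) := by gcongr; exact hsum.sum_le_tsum _ fun m _ => hg m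
    _ = _ := by ring

lemma tendsto_sum_growthTerm_zero (δ : ℕ) {α : ℕ} (hα : 1 ≤ α) {lam : ℝ} (hlam : 1 < lam) :
    Tendsto (fun n : ℕ => ∑ ℓ ∈ range (2 * n + 1), growthTerm δ α lam n ℓ) atTop (𝓝 0) :=
  tendsto_of_tendsto_of_tendsto_of_le_of_le' tendsto_const_nhds
    (tendsto_const_div_atTop_nhds_zero_nat _)
    (Eventually.of_forall fun _ =>
      sum_nonneg fun _ hℓ =>
        growthTerm_nonneg (one_pos.trans hlam) (Nat.lt_succ_iff.1 (mem_range.1 hℓ)))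
    (eventually_ge_atTop 1 |>.mono fun _ hn => sum_growthTerm_le hn hα hlam)

lemma not_exists_pos_forall_lt_of_tendsto_zero {u : ℕ → ℝ} (hu : Tendsto u atTop (𝓝 0)) :
    ¬ ∃ c : ℝ, 0 < c ∧ ∀ n : ℕ, 1 ≤ n → c < u n := by
  rintro ⟨c, hc, hlt⟩
  obtain ⟨n, hsmall, hn⟩ := ((hu.eventually (gt_mem_nhds hc)).and (eventually_ge_atTop 1)).exists
  exact (hlt n hn).not_gt hsmall

theorem sum_tendsto_zero_of_alpha_pos_general (δ α : ℕ) (hα : 1 ≤ α)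
    (lam : ℝ) (hlam : 1 < lam) :
    Tendsto
        (fun n : ℕ =>
          ∑ ℓ ∈ Finset.range (2 * n + 1),
            ((ℓ : ℝ) / (2 * n)) ^ α *
              ((((δ : ℤ) + ⌈(n : ℝ) - (ℓ : ℝ) / 2⌉ : ℤ) : ℝ) / (n : ℝ)) ^ α *
              lam ^ ((δ : ℤ) + ⌈(ℓ : ℝ) / 2⌉ - (n : ℤ)))
        atTop (𝓝 0) ∧
      ¬ ∃ c : ℝ, 0 < c ∧ ∀ n : ℕ, 1 ≤ n →
        c < ∑ ℓ ∈ Finset.range (2 * n + 1),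
            ((ℓ : ℝ) / (2 * n)) ^ α *
              ((((δ : ℤ) + ⌈(n : ℝ) - (ℓ : ℝ) / 2⌉ : ℤ) : ℝ) / (n : ℝ)) ^ α *
              lam ^ ((δ : ℤ) + ⌈(ℓ : ℝ) / 2⌉ - (n : ℤ)) := by
  have h := tendsto_sum_growthTerm_zero δ hα hlam
  exact ⟨h, not_exists_pos_forall_lt_of_tendsto_zero h⟩

/-- For integers `δ ≥ 1`, `α ≥ 1` and real `λ > 1`, the sum
`Σ_{ℓ=0}^{2n} (ℓ/(2n))^α ((δ + ⌈n − ℓ/2⌉)/n)^α λ^{δ+⌈ℓ/2⌉−n}` tends to `0` as `n → ∞`;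
in particular it is not bounded away from `0` by any constant `c > 0` for all `n ≥ 1`. -/
theorem sum_tendsto_zero_of_alpha_pos (δ α : ℕ) (hδ : 1 ≤ δ) (hα : 1 ≤ α)
    (lam : ℝ) (hlam : 1 < lam) :
    Tendsto
        (fun n : ℕ =>
          ∑ ℓ ∈ Finset.range (2 * n + 1),
            ((ℓ : ℝ) / (2 * n)) ^ α *
              ((((δ : ℤ) + ⌈(n : ℝ) - (ℓ : ℝ) / 2⌉ : ℤ) : ℝ) / (n : ℝ)) ^ α *
              lam ^ ((δ : ℤ) + ⌈(ℓ : ℝ) / 2⌉ - (n : ℤ)))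
        atTop (𝓝 0) ∧
      ¬ ∃ c : ℝ, 0 < c ∧ ∀ n : ℕ, 1 ≤ n →
        c < ∑ ℓ ∈ Finset.range (2 * n + 1),
            ((ℓ : ℝ) / (2 * n)) ^ α *
              ((((δ : ℤ) + ⌈(n : ℝ) - (ℓ : ℝ) / 2⌉ : ℤ) : ℝ) / (n : ℝ)) ^ α *
              lam ^ ((δ : ℤ) + ⌈(ℓ : ℝ) / 2⌉ - (n : ℤ)) :=
  sum_tendsto_zero_of_alpha_pos_general δ α hα lam hlam
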